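/- arXiv:2306.04974 — 3 statements merged into one kernel-verified Lean document; each statement's English description precedes it below -/
import Mathlib

section
/- Let C ≥ 1 be an integer, ε ≥ 0 a real number, and q a positive probability vector on Fin C. If KL(U ‖ q) ≤ ε, then MSP(q) ≤ 1/C + Real.sqrt (ε/2). -/
/-- `p` is a positive probability vector on `Fin C`. -/
def IsPosProbVec {C : ℕ} (p : Fin C → ℝ) : Prop :=
  (∀ i, 0 < p i) ∧ ∑ i, p i = 1

/-- The uniform probability vector on `Fin C`. -/
noncomputable def unif (C : ℕ) : Fin C → ℝ := fun _ => 1 / (C : ℝ)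

/-- Maximum softmax probability: the maximum of `p` over `Fin C`. -/
noncomputable def MSP {C : ℕ} (p : Fin C → ℝ) : ℝ := ⨆ i, p i

/-- KL divergence `KL(a ‖ b) = ∑ i, a i * log (a i / b i)`; terms with
`a i = 0` contribute `0` (which holds since `0 * log (0 / b i) = 0`). -/
noncomputable def KLdiv {C : ℕ} (a b : Fin C → ℝ) : ℝ :=
  ∑ i, a i * Real.log (a i / b i)

/-!
Lumping every class other than the argmax `i` of `q` into a single one can only decrease the
divergence (log-sum inequality), so `KL(U ‖ q)` dominates the binary divergence between
`Bernoulli (1/C)` and `Bernoulli (q i)`. Pinsker's inequality for two-point distributions,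
`2 (x - u)² ≤ kl(u, x)`, then bounds `q i - 1/C` by `√(ε/2)`.
-/

open Real Finset Set

/-- The log-sum inequality: Jensen for the convex function `x ↦ x log x` at the points `a i / b i`
with weights `b i`. -/
theorem sum_mul_log_div_sum_le {ι : Type*} (s : Finset ι) {a b : ι → ℝ}
    (ha : ∀ i ∈ s, 0 ≤ a i) (hb : ∀ i ∈ s, 0 < b i) :
    (∑ i ∈ s, a i) * log ((∑ i ∈ s, a i) / ∑ i ∈ s, b i) ≤
      ∑ i ∈ s, a i * log (a i / b i) := by
  rcases s.eq_empty_or_nonempty with rfl | hs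
  · simp
  have hB : 0 < ∑ i ∈ s, b i := sum_pos hb hs
  have hcancel : ∀ i ∈ s, b i * (a i / b i) = a i :=
    fun i hi => mul_div_cancel₀ _ (hb i hi).ne'
  have hjensen := convexOn_mul_log.map_centerMass_le (fun i hi => (hb i hi).le) hB
    (p := fun i => a i / b i) fun i hi => Set.mem_Ici.2 (div_nonneg (ha i hi) (hb i hi).le)
  simp only [centerMass, Function.comp_apply, smul_eq_mul, ← mul_assoc] at hjensen
  rwa [sum_congr rfl hcancel,
    sum_congr rfl fun i hi => congrArg (· * log (a i / b i)) (hcancel i hi), ← div_eq_inv_mul,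
    div_mul_eq_mul_div, ← div_eq_inv_mul, div_le_div_iff_of_pos_right hB] at hjensen

noncomputable def binaryKL (u x : ℝ) : ℝ :=
  u * log (u / x) + (1 - u) * log ((1 - u) / (1 - x))

theorem binaryKL_one_sub_one_sub (u x : ℝ) : binaryKL (1 - u) (1 - x) = binaryKL u x := by
  simp only [binaryKL, sub_sub_cancel]
  ring

theorem binaryKL_self (u : ℝ) : binaryKL u u = 0 := by
  simp [binaryKL]

theorem hasDerivAt_binaryKL {u x : ℝ} (hu₀ : 0 < u) (hu₁ : u < 1) (hx₀ : 0 < x)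
    (hx₁ : x < 1) :
    HasDerivAt (binaryKL u) (-(u / x) + (1 - u) / (1 - x)) x := by
  have hx₁' : 0 < 1 - x := sub_pos.2 hx₁
  have hu₁' : 0 < 1 - u := sub_pos.2 hu₁
  have h₁ := (((hasDerivAt_const x u).div (hasDerivAt_id x) hx₀.ne').log
    (div_pos hu₀ hx₀).ne').const_mul u
  have h₂ := (((hasDerivAt_const x (1 - u)).div ((hasDerivAt_id x).const_sub 1) hx₁'.ne').log
    (div_pos hu₁' hx₁').ne').const_mul (1 - u)
  refine (h₁.add h₂).congr_deriv ?_
  simp only [Pi.div_apply, id]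
  field_simp
  ring

theorem two_mul_sq_sub_le_binaryKL_of_le {u x : ℝ} (hu₀ : 0 < u) (hux : u ≤ x)
    (hx₁ : x < 1) :
    2 * (x - u) ^ 2 ≤ binaryKL u x := by
  have hu₁ : u < 1 := hux.trans_lt hx₁
  have hderiv : ∀ y ∈ Ico u 1, HasDerivAt (fun y => binaryKL u y - 2 * (y - u) ^ 2)
      (-(u / y) + (1 - u) / (1 - y) - 4 * (y - u)) y := by
    intro y ⟨huy, hy₁⟩
    refine ((hasDerivAt_binaryKL hu₀ hu₁ (hu₀.trans_le huy) hy₁).sub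
      (((hasDerivAt_id y).sub_const u).pow 2 |>.const_mul 2)).congr_deriv ?_
    simp only [id]
    ring
  have hmono : MonotoneOn (fun y => binaryKL u y - 2 * (y - u) ^ 2) (Ico u 1) := by
    refine monotoneOn_of_hasDerivWithinAt_nonneg (convex_Ico u 1)
      (fun y hy => (hderiv y hy).continuousAt.continuousWithinAt)
      (fun y hy => (hderiv y (interior_subset hy)).hasDerivWithinAt) fun y hy => ?_
    rw [interior_Ico] at hy
    obtain ⟨huy, hy₁⟩ := hy
    have hy₀ : 0 < y := hu₀.trans huy
    have hy₁' : 0 < 1 - y := sub_pos.2 hy₁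
    have hfactor : -(u / y) + (1 - u) / (1 - y) - 4 * (y - u) =
        (y - u) * (2 * y - 1) ^ 2 / (y * (1 - y)) := by
      field_simp
      ring
    rw [hfactor]
    exact div_nonneg (mul_nonneg (sub_nonneg.2 huy.le) (sq_nonneg _)) (mul_pos hy₀ hy₁').le
  simpa [binaryKL_self] using hmono ⟨le_rfl, hu₁⟩ ⟨hux, hx₁⟩ hux

theorem two_mul_sq_sub_le_binaryKL {u x : ℝ} (hu₀ : 0 < u) (hu₁ : u < 1) (hx₀ : 0 < x)
    (hx₁ : x < 1) : 2 * (x - u) ^ 2 ≤ binaryKL u x := by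
  rcases le_total u x with hux | hxu
  · exact two_mul_sq_sub_le_binaryKL_of_le hu₀ hux hx₁
  · rw [← binaryKL_one_sub_one_sub, ← neg_sub, neg_sq, ← sub_sub_sub_cancel_left x u 1]
    exact two_mul_sq_sub_le_binaryKL_of_le (by linarith) (by linarith) (by linarith)

theorem IsPosProbVec.le_one {C : ℕ} {q : Fin C → ℝ} (hq : IsPosProbVec q) (i : Fin C) :
    q i ≤ 1 :=
  hq.2 ▸ single_le_sum (fun j _ => (hq.1 j).le) (mem_univ i)

theorem IsPosProbVec.sum_erase {C : ℕ} {q : Fin C → ℝ} (hq : IsPosProbVec q) (i : Fin C) :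
    ∑ j ∈ univ.erase i, q j = 1 - q i := by
  rw [← hq.2, ← add_sum_erase univ q (mem_univ i), add_sub_cancel_left]

theorem IsPosProbVec.lt_one {C : ℕ} {q : Fin C → ℝ} (hq : IsPosProbVec q) (hC : 1 < C)
    (i : Fin C) : q i < 1 := by
  have : Nontrivial (Fin C) := Fin.nontrivial_iff_two_le.2 hC
  obtain ⟨j, hji⟩ := exists_ne i
  have hrest : 0 < ∑ j ∈ univ.erase i, q j :=
    sum_pos (fun j _ => hq.1 j) ⟨j, mem_erase.2 ⟨hji, mem_univ j⟩⟩
  linarith [hq.sum_erase i]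

theorem binaryKL_le_KLdiv_unif {C : ℕ} {q : Fin C → ℝ} (hq : IsPosProbVec q) (i : Fin C) :
    binaryKL (1 / C) (q i) ≤ KLdiv (unif C) q := by
  have hC : (C : ℝ) ≠ 0 := Nat.cast_ne_zero.2 (Fin.pos i).ne'
  have hrest : ∑ _j ∈ univ.erase i, (1 / C : ℝ) = 1 - 1 / C := by
    rw [sum_const, card_erase_of_mem (mem_univ i), card_univ, Fintype.card_fin, nsmul_eq_mul,
      Nat.cast_sub (Fin.pos i), Nat.cast_one]
    field_simp
  have hlogsum := sum_mul_log_div_sum_le (univ.erase i) (a := fun _ => (1 / C : ℝ)) (b := q)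
    (fun _ _ => by positivity) fun j _ => hq.1 j
  rw [hrest, hq.sum_erase i] at hlogsum
  rw [KLdiv, ← add_sum_erase _ _ (mem_univ i)]
  exact add_le_add_right hlogsum _

theorem MSP_le_of_KL_unif_le_general
    (C : ℕ) (hC : 1 ≤ C) (ε : ℝ)
    (q : Fin C → ℝ) (hq : IsPosProbVec q)
    (hKL : KLdiv (unif C) q ≤ ε) :
    MSP q ≤ 1 / (C : ℝ) + Real.sqrt (ε / 2) := by
  have : Nonempty (Fin C) := ⟨⟨0, hC⟩⟩
  obtain ⟨i, hi⟩ := exists_eq_ciSup_of_finite (f := q)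
  rw [MSP, ← hi]
  rcases hC.eq_or_lt with rfl | hC₂
  · have := sqrt_nonneg (ε / 2)
    linarith [hq.le_one i]
  · have hu₀ : (0 : ℝ) < 1 / C := by positivity
    have hu₁ : 1 / (C : ℝ) < 1 := by
      rw [div_lt_one (by positivity)]
      exact_mod_cast hC₂
    have hpinsker := two_mul_sq_sub_le_binaryKL hu₀ hu₁ (hq.1 i) (hq.lt_one hC₂ i)
    have hdp := binaryKL_le_KLdiv_unif hq i
    have := Real.abs_le_sqrt (show (q i - 1 / C) ^ 2 ≤ ε / 2 by linarith)
    linarith [le_abs_self (q i - 1 / C)]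

/-- If `q` is KL-close to uniform, then its maximum softmax probability is
close to `1/C`. -/
theorem MSP_le_of_KL_unif_le
    (C : ℕ) (hC : 1 ≤ C) (ε : ℝ) (hε : 0 ≤ ε)
    (q : Fin C → ℝ) (hq : IsPosProbVec q)
    (hKL : KLdiv (unif C) q ≤ ε) :
    MSP q ≤ 1 / (C : ℝ) + Real.sqrt (ε / 2) :=
  MSP_le_of_KL_unif_le_general C hC ε q hq hKL
end

section
/- Let C ≥ 2 be an integer, λ > 0 a real number, X a type, A and B nonempty finite subsets of X with A ∩ B = ∅, and y : X → Fin C. Then there exists ε > 0 (depending only on C, λ, and the cardinalities of A and B) such that for every function f : X → (Fin C → ℝ) whose value f x is a positive probability vector on Fin C for every x ∈ A ∪ B, if L(f) − L_0 < ε then the minimum over a ∈ A of MSP(f a) is strictly greater than the maximum over b ∈ B of MSP(f b). -/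
/-- The smoothed vector `p_λ`, `p_λ i = (p i + λ/C)/(1 + λ)`. -/
noncomputable def smooth {C : ℕ} (lam : ℝ) (p : Fin C → ℝ) : Fin C → ℝ :=
  fun i => (p i + lam / (C : ℝ)) / (1 + lam)

/-- Cross-entropy `H(a, b) = −∑ i, a i * log (b i)`. -/
noncomputable def crossEnt {C : ℕ} (a b : Fin C → ℝ) : ℝ :=
  -∑ i, a i * Real.log (b i)

/-- The one-hot probability vector at `y`. -/
def oneHot {C : ℕ} (y : Fin C) : Fin C → ℝ := fun i => if i = y then 1 else 0

/-- The DCM loss `L(f)`. -/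
noncomputable def dcmLoss {C : ℕ} {X : Type*} (A B : Finset X) (y : X → Fin C)
    (lam : ℝ) (f : X → (Fin C → ℝ)) : ℝ :=
  (∑ x ∈ A, (crossEnt (oneHot (y x)) (f x) + lam * crossEnt (unif C) (f x))) +
    lam * ∑ x ∈ B, crossEnt (unif C) (f x)

/-- The optimal DCM loss `L_0`. -/
noncomputable def dcmOptLoss {C : ℕ} {X : Type*} (A B : Finset X) (y : X → Fin C)
    (lam : ℝ) : ℝ :=
  (∑ x ∈ A, (crossEnt (oneHot (y x)) (smooth lam (oneHot (y x))) +
      lam * crossEnt (unif C) (smooth lam (oneHot (y x))))) +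
    lam * (B.card : ℝ) * Real.log (C : ℝ)

open Finset

noncomputable def klTerm (q t : ℝ) : ℝ := q * Real.log (q / t) + t - q

lemma klTerm_self (q : ℝ) : klTerm q q = 0 := by
  by_cases hq : q = 0 <;> simp [klTerm, hq]

section klTerm

variable {q t τ : ℝ}

/-- Tangent-line bound for the convex function `klTerm q`, whose slope at `τ` is
`(τ - q) / τ`. -/
lemma mul_div_le_klTerm_sub_klTerm (hq : 0 ≤ q) (hτ : 0 < τ) (ht : 0 < t) :
    (t - τ) * (τ - q) / τ ≤ klTerm q t - klTerm q τ := by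
  have hlog : q * Real.log (t / τ) ≤ q * (t / τ - 1) :=
    mul_le_mul_of_nonneg_left (Real.log_le_sub_one_of_pos (by positivity)) hq
  have hsplit : klTerm q t - klTerm q τ = t - τ - q * Real.log (t / τ) := by
    by_cases hq0 : q = 0
    · simp [klTerm, hq0]
    · rw [klTerm, klTerm, Real.log_div hq0 ht.ne', Real.log_div hq0 hτ.ne',
        Real.log_div ht.ne' hτ.ne']
      ring
  have hrhs : (t - τ) * (τ - q) / τ = t - τ - q * (t / τ - 1) := by
    field_simp
  rw [hsplit, hrhs]
  linarith

lemma klTerm_nonneg (hq : 0 ≤ q) (ht : 0 < t) : 0 ≤ klTerm q t := by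
  rcases hq.eq_or_lt with rfl | hq
  · simp [klTerm, ht.le]
  · have := mul_div_le_klTerm_sub_klTerm hq.le hq ht
    rw [klTerm_self, sub_self, mul_zero, zero_div] at this
    linarith

lemma klTerm_pos (hq : 0 < q) (ht : 0 < t) (hqt : q ≠ t) : 0 < klTerm q t := by
  have hlog : Real.log (t / q) < t / q - 1 :=
    Real.log_lt_sub_one_of_pos (by positivity) (by rwa [ne_eq, div_eq_one_iff_eq hq.ne', eq_comm])
  have hlog' : q * Real.log (q / t) = -(q * Real.log (t / q)) := by
    rw [← inv_div, Real.log_inv, mul_neg]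
  have hlin : q * (t / q - 1) = t - q := by field_simp
  have := mul_lt_mul_of_pos_left hlog hq
  rw [klTerm, hlog']
  linarith

lemma klTerm_le_klTerm_of_le_of_le (ht : 0 < t) (htτ : t ≤ τ) (hτq : τ ≤ q) :
    klTerm q τ ≤ klTerm q t := by
  have := mul_div_le_klTerm_sub_klTerm (ht.trans_le (htτ.trans hτq)).le (ht.trans_le htτ) ht
  have : 0 ≤ (t - τ) * (τ - q) / τ :=
    div_nonneg (mul_nonneg_of_nonpos_of_nonpos (by linarith) (by linarith)) (by linarith)
  linarith

lemma klTerm_le_klTerm_of_le_of_le' (hq : 0 < q) (hqτ : q ≤ τ) (hτt : τ ≤ t) :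
    klTerm q τ ≤ klTerm q t := by
  have := mul_div_le_klTerm_sub_klTerm hq.le (hq.trans_le hqτ) (hq.trans_le (hqτ.trans hτt))
  have : 0 ≤ (t - τ) * (τ - q) / τ :=
    div_nonneg (mul_nonneg (by linarith) (by linarith)) (by linarith)
  linarith

end klTerm

noncomputable def relEnt {C : ℕ} (q p : Fin C → ℝ) : ℝ := crossEnt q p - crossEnt q q

section relEnt

variable {C : ℕ} {q p : Fin C → ℝ}

lemma relEnt_eq_sum_klTerm (hq : IsPosProbVec q) (hp : IsPosProbVec p) :
    relEnt q p = ∑ i, klTerm (q i) (p i) := by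
  have hmass : ∑ i, (p i - q i) = 0 := by rw [sum_sub_distrib, hp.2, hq.2, sub_self]
  simp only [relEnt, crossEnt, klTerm, add_sub_assoc, sum_add_distrib, hmass, add_zero]
  rw [neg_sub_neg, ← sum_sub_distrib]
  refine sum_congr rfl fun i _ => ?_
  rw [Real.log_div (hq.1 i).ne' (hp.1 i).ne']
  ring

lemma klTerm_le_relEnt (hq : IsPosProbVec q) (hp : IsPosProbVec p) (j : Fin C) :
    klTerm (q j) (p j) ≤ relEnt q p := by
  rw [relEnt_eq_sum_klTerm hq hp]
  exact single_le_sum (fun i _ => klTerm_nonneg (hq.1 i).le (hp.1 i)) (mem_univ j)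

lemma relEnt_nonneg [NeZero C] (hq : IsPosProbVec q) (hp : IsPosProbVec p) : 0 ≤ relEnt q p :=
  (klTerm_nonneg (hq.1 0).le (hp.1 0)).trans (klTerm_le_relEnt hq hp 0)

lemma lt_apply_of_relEnt_lt {τ : ℝ} (hq : IsPosProbVec q) (hp : IsPosProbVec p) {j : Fin C}
    (hτq : τ ≤ q j) (h : relEnt q p < klTerm (q j) τ) : τ < p j := by
  by_contra! hpτ
  exact h.not_ge <|
    (klTerm_le_klTerm_of_le_of_le (hp.1 j) hpτ hτq).trans (klTerm_le_relEnt hq hp j)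

lemma apply_lt_of_relEnt_lt {τ : ℝ} (hq : IsPosProbVec q) (hp : IsPosProbVec p) {j : Fin C}
    (hqτ : q j ≤ τ) (h : relEnt q p < klTerm (q j) τ) : p j < τ := by
  by_contra! hτp
  exact h.not_ge <|
    (klTerm_le_klTerm_of_le_of_le' (hq.1 j) hqτ hτp).trans (klTerm_le_relEnt hq hp j)

end relEnt

section smoothing

variable {C : ℕ}

lemma unif_isPosProbVec [NeZero C] : IsPosProbVec (unif C) := by
  have hC : (C : ℝ) ≠ 0 := NeZero.ne _
  refine ⟨fun _ => by simp [unif, Nat.pos_of_neZero C], ?_⟩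
  simp [unif, hC]

lemma smooth_oneHot_isPosProbVec [NeZero C] {lam : ℝ} (hlam : 0 < lam) (k : Fin C) :
    IsPosProbVec (smooth lam (oneHot k)) := by
  have hC : (0 : ℝ) < C := Nat.cast_pos.2 (Nat.pos_of_neZero C)
  refine ⟨fun i => by unfold smooth oneHot; split_ifs <;> positivity, ?_⟩
  simp only [smooth, oneHot, ← sum_div, sum_add_distrib, sum_ite_eq', mem_univ, if_true,
    sum_const, card_univ, Fintype.card_fin, nsmul_eq_mul]
  field_simp

lemma smooth_oneHot_self (lam : ℝ) (k : Fin C) :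
    smooth lam (oneHot k) k = (1 + lam / C) / (1 + lam) := by
  simp [smooth, oneHot]

lemma one_div_lt_smooth_oneHot_self {lam : ℝ} (hC : 1 < C) (hlam : 0 ≤ lam) :
    1 / (C : ℝ) < (1 + lam / C) / (1 + lam) := by
  have hC' : (1 : ℝ) < C := by exact_mod_cast hC
  rw [div_lt_div_iff₀ (by linarith) (by linarith), one_mul, add_mul, one_mul,
    div_mul_cancel₀ _ (by positivity)]
  linarith

lemma crossEnt_smooth_oneHot {lam : ℝ} (hlam : 1 + lam ≠ 0) (k : Fin C) (p : Fin C → ℝ) :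
    (1 + lam) * crossEnt (smooth lam (oneHot k)) p
      = crossEnt (oneHot k) p + lam * crossEnt (unif C) p := by
  simp only [crossEnt, smooth, unif, mul_neg, ← neg_add, mul_sum, ← sum_add_distrib]
  congr 1
  refine sum_congr rfl fun i _ => ?_
  field_simp

lemma crossEnt_unif_unif : crossEnt (unif C) (unif C) = Real.log C := by
  rcases Nat.eq_zero_or_pos C with rfl | hC
  · simp [crossEnt]
  · have hC' : (C : ℝ) ≠ 0 := by positivity
    simp [crossEnt, unif, hC']

end smoothing

lemma dcmLoss_sub_dcmOptLoss {C : ℕ} {X : Type*} (A B : Finset X) (y : X → Fin C) {lam : ℝ}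
    (hlam : 1 + lam ≠ 0) (f : X → (Fin C → ℝ)) :
    dcmLoss A B y lam f - dcmOptLoss A B y lam
      = (1 + lam) * ∑ a ∈ A, relEnt (smooth lam (oneHot (y a))) (f a)
        + lam * ∑ b ∈ B, relEnt (unif C) (f b) := by
  simp only [dcmLoss, dcmOptLoss, relEnt, mul_sum, mul_sub, crossEnt_smooth_oneHot hlam,
    crossEnt_unif_unif, sum_sub_distrib, sum_const, nsmul_eq_mul]
  ring

lemma le_MSP {C : ℕ} (p : Fin C → ℝ) (j : Fin C) : p j ≤ MSP p :=
  le_ciSup (Finite.bddAbove_range p) j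

lemma MSP_lt {C : ℕ} [NeZero C] {p : Fin C → ℝ} {τ : ℝ} (h : ∀ j, p j < τ) :
    MSP p < τ := by
  obtain ⟨j, hj⟩ := exists_eq_ciSup_of_finite (f := p)
  rw [MSP, ← hj]
  exact h j

lemma forall_lt_of_mul_sum_lt {ι : Type*} {s : Finset ι} {g : ι → ℝ} {c δ : ℝ}
    (hc : 0 < c) (hg : ∀ i ∈ s, 0 ≤ g i) (h : c * ∑ i ∈ s, g i < c * δ) :
    ∀ i ∈ s, g i < δ :=
  fun _ hi => (single_le_sum hg hi).trans_lt (lt_of_mul_lt_mul_left h hc.le)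

lemma lt_MSP_of_relEnt_smooth_oneHot_lt {C : ℕ} [NeZero C] {lam τ : ℝ} (hlam : 0 < lam)
    {k : Fin C} {p : Fin C → ℝ} (hp : IsPosProbVec p) (hτ : τ ≤ (1 + lam / C) / (1 + lam))
    (h : relEnt (smooth lam (oneHot k)) p < klTerm ((1 + lam / C) / (1 + lam)) τ) :
    τ < MSP p := by
  rw [← smooth_oneHot_self lam k] at hτ h
  exact (lt_apply_of_relEnt_lt (smooth_oneHot_isPosProbVec hlam k) hp hτ h).trans_le (le_MSP p k)

lemma MSP_lt_of_relEnt_unif_lt {C : ℕ} [NeZero C] {τ : ℝ} {p : Fin C → ℝ}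
    (hp : IsPosProbVec p) (hτ : 1 / (C : ℝ) ≤ τ) (h : relEnt (unif C) p < klTerm (1 / C) τ) :
    MSP p < τ :=
  MSP_lt fun _ => apply_lt_of_relEnt_lt unif_isPosProbVec hp hτ h

theorem low_loss_implies_separation_general
    (C : ℕ) (hC : 2 ≤ C) (lam : ℝ) (hlam : 0 < lam)
    {X : Type*} [DecidableEq X] (A B : Finset X) (hA : A.Nonempty) (hB : B.Nonempty)
    (y : X → Fin C) :
    ∃ ε > 0, ∀ f : X → (Fin C → ℝ),
      (∀ x ∈ A ∪ B, IsPosProbVec (f x)) →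
      dcmLoss A B y lam f - dcmOptLoss A B y lam < ε →
      A.inf' hA (fun a => MSP (f a)) > B.sup' hB (fun b => MSP (f b)) := by
  have : NeZero C := ⟨by omega⟩
  set u : ℝ := 1 / C
  set m : ℝ := (1 + lam / C) / (1 + lam)
  have hum : u < m := one_div_lt_smooth_oneHot_self (by omega) hlam.le
  have hu : 0 < u := by positivity
  set τ := (u + m) / 2 with hτ
  have huτ : u < τ := by linarith
  have hτm : τ < m := by linarith
  set εA := (1 + lam) * klTerm m τ with hεA
  set εB := lam * klTerm u τ with hεB
  refine ⟨min εA εB,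
    lt_min (mul_pos (by linarith) (klTerm_pos (hu.trans hum) (by positivity) hτm.ne'))
      (mul_pos hlam (klTerm_pos hu (by positivity) huτ.ne)), ?_⟩
  intro f hf hgap
  rw [dcmLoss_sub_dcmOptLoss A B y (by linarith)] at hgap
  have hrelA : ∀ a ∈ A, 0 ≤ relEnt (smooth lam (oneHot (y a))) (f a) := fun a ha =>
    relEnt_nonneg (smooth_oneHot_isPosProbVec hlam _) (hf a (mem_union_left _ ha))
  have hrelB : ∀ b ∈ B, 0 ≤ relEnt (unif C) (f b) := fun b hb =>
    relEnt_nonneg unif_isPosProbVec (hf b (mem_union_right _ hb))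
  have hsumA := mul_nonneg (by linarith : (0 : ℝ) ≤ 1 + lam) (sum_nonneg hrelA)
  have hsumB := mul_nonneg hlam.le (sum_nonneg hrelB)
  have hA_large : ∀ a ∈ A, τ < MSP (f a) := fun a ha =>
    lt_MSP_of_relEnt_smooth_oneHot_lt hlam (hf a (mem_union_left _ ha)) hτm.le
      (forall_lt_of_mul_sum_lt (c := 1 + lam) (by linarith) hrelA
        (by linarith [min_le_left εA εB]) a ha)
  have hB_small : ∀ b ∈ B, MSP (f b) < τ := fun b hb =>
    MSP_lt_of_relEnt_unif_lt (hf b (mem_union_right _ hb)) huτ.le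
      (forall_lt_of_mul_sum_lt hlam hrelB (by linarith [min_le_right εA εB]) b hb)
  exact ((sup'_lt_iff hB).2 hB_small).trans ((lt_inf'_iff hA).2 hA_large)

/-- Low DCM loss implies separation: there is `ε > 0` such that any predictor
whose loss is within `ε` of optimal assigns strictly larger maximum softmax
probability to every point of `A` than to every point of `B`. -/
theorem low_loss_implies_separation
    (C : ℕ) (hC : 2 ≤ C) (lam : ℝ) (hlam : 0 < lam)
    {X : Type*} [DecidableEq X] (A B : Finset X) (hA : A.Nonempty) (hB : B.Nonempty)
    (hAB : Disjoint A B) (y : X → Fin C) :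
    ∃ ε > 0, ∀ f : X → (Fin C → ℝ),
      (∀ x ∈ A ∪ B, IsPosProbVec (f x)) →
      dcmLoss A B y lam f - dcmOptLoss A B y lam < ε →
      A.inf' hA (fun a => MSP (f a)) > B.sup' hB (fun b => MSP (f b)) :=
  low_loss_implies_separation_general C hC lam hlam A B hA hB y
end

section
/- Let C ≥ 2 be an integer, λ > 0 and K > 0 real numbers, X a metric space, A and B nonempty finite subsets of X with A ∩ B = ∅, and y : X → Fin C. Then there exist ε > 0 and δ > 0 (depending only on C, λ, K, and the cardinalities of A and B) such that the following holds: for every function f : X → (Fin C → ℝ) whose value f x is a positive probability vector on Fin C for every x ∈ X, which is K-Lipschitz with respect to the sup norm on outputs (i.e. max over i of |f x i − f x' i| ≤ K * dist x x' for all x, x' ∈ X), and which satisfies L(f) − L_0 < ε, we have MSP(f x') > MSP(f x'') for every x' ∈ X with dist x' a < δ for some a ∈ A and every x'' ∈ X with dist x'' b < δ for some b ∈ B. -/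
open Finset in
/-- B-side per-point bound: excess over `log C` dominates `ψ(C p j)/C`. -/
lemma auxB {C : ℕ} (hC : 1 ≤ C) (p : Fin C → ℝ)
    (hpos : ∀ i, 0 < p i) (hsum : ∑ i, p i = 1) (j : Fin C) :
    (C : ℝ) * p j - 1 - Real.log ((C : ℝ) * p j)
      ≤ (C : ℝ) * (crossEnt (unif C) p - Real.log C) := by
  have hCpos : (0:ℝ) < C := by exact_mod_cast hC
  have key : (C : ℝ) * (crossEnt (unif C) p - Real.log C)
      = -∑ i, Real.log ((C:ℝ) * p i) := by
    simp only [crossEnt, unif]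
    have : ∀ i : Fin C, Real.log ((C:ℝ) * p i) = Real.log C + Real.log (p i) := by
      intro i
      rw [Real.log_mul (ne_of_gt hCpos) (ne_of_gt (hpos i))]
    rw [Finset.sum_congr rfl (fun i _ => this i), Finset.sum_add_distrib,
      Finset.sum_const]
    simp only [Finset.card_univ, Fintype.card_fin, nsmul_eq_mul]
    have h2 : ∑ x : Fin C, 1 / (C:ℝ) * Real.log (p x)
        = (1/(C:ℝ)) * ∑ x : Fin C, Real.log (p x) := by
      rw [Finset.mul_sum]
    rw [h2]
    field_simp
    ring
  rw [key]
  have hmem : j ∈ (univ : Finset (Fin C)) := mem_univ j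
  rw [← Finset.add_sum_erase _ _ hmem]
  have hrest : ∑ i ∈ univ.erase j, Real.log ((C:ℝ) * p i)
      ≤ ∑ i ∈ univ.erase j, ((C:ℝ) * p i - 1) := by
    apply Finset.sum_le_sum
    intro i _
    exact Real.log_le_sub_one_of_pos (mul_pos hCpos (hpos i))
  have hcardv : (univ.erase j).card = C - 1 := by
    rw [Finset.card_erase_of_mem hmem, Finset.card_univ, Fintype.card_fin]
  have hsum' : ∑ i ∈ univ.erase j, p i = 1 - p j := by
    have h := Finset.add_sum_erase _ p hmem
    rw [hsum] at h
    linarith [h]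
  have hrest2 : ∑ i ∈ univ.erase j, ((C:ℝ) * p i - 1) = 1 - (C:ℝ) * p j := by
    rw [Finset.sum_sub_distrib, ← Finset.mul_sum, hsum', Finset.sum_const, hcardv]
    have hc : ((C - 1 : ℕ) : ℝ) = (C : ℝ) - 1 := by
      push_cast [Nat.cast_sub hC]
      ring
    rw [nsmul_eq_mul, hc]
    ring
  linarith [hrest, hrest2.le, hrest2.ge]

open Finset in
/-- A-side per-point bound: the excess dominates `(1+λ)F(p c)`. -/
lemma auxA {C : ℕ} (hC : 1 ≤ C) (lam : ℝ) (hlam : 0 < lam) (p : Fin C → ℝ)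
    (hpos : ∀ i, 0 < p i) (hsum : ∑ i, p i = 1) (c : Fin C) :
    (1 + lam) * ((1 + lam / C) / (1 + lam) * Real.log ((1 + lam / C) / (1 + lam))
        - (1 + lam / C) / (1 + lam) * Real.log (p c)
        + p c - (1 + lam / C) / (1 + lam))
      ≤ (crossEnt (oneHot c) p + lam * crossEnt (unif C) p)
        - (crossEnt (oneHot c) (smooth lam (oneHot c))
            + lam * crossEnt (unif C) (smooth lam (oneHot c))) := by
  have hCpos : (0:ℝ) < C := by exact_mod_cast hC
  have h1l : (0:ℝ) < 1 + lam := by linarith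
  set m : ℝ := (1 + lam / C) / (1 + lam) with hmdef
  set u : ℝ := (lam / C) / (1 + lam) with hudef
  have hupos : 0 < u := by rw [hudef]; positivity
  have hmpos : 0 < m := by
    rw [hmdef]
    have : 0 < 1 + lam / C := by positivity
    positivity
  have hq : ∀ i, smooth lam (oneHot c) i = if i = c then m else u := by
    intro i
    simp only [smooth, oneHot, hmdef, hudef]
    split <;> simp
  have e1 : crossEnt (oneHot c) p = -Real.log (p c) := by
    rw [crossEnt]
    have h : ∀ i : Fin C, oneHot c i * Real.log (p i)
        = if i = c then Real.log (p c) else 0 := by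
      intro i; simp only [oneHot]; split
      · rename_i h; rw [h]; ring
      · ring
    rw [Finset.sum_congr rfl (fun i _ => h i), Finset.sum_ite_eq' univ c]
    simp
  have e1q : crossEnt (oneHot c) (smooth lam (oneHot c)) = -Real.log m := by
    rw [crossEnt]
    have h : ∀ i : Fin C, oneHot c i * Real.log (smooth lam (oneHot c) i)
        = if i = c then Real.log m else 0 := by
      intro i; rw [hq i]; simp only [oneHot]; split
      · simp
      · ring
    rw [Finset.sum_congr rfl (fun i _ => h i), Finset.sum_ite_eq' univ c]
    simp
  have e2 : crossEnt (unif C) p = -((1/(C:ℝ)) * ∑ i, Real.log (p i)) := by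
    rw [crossEnt, Finset.mul_sum]
    simp [unif]
  have hcardv : ((univ.erase c).card : ℝ) = (C : ℝ) - 1 := by
    rw [Finset.card_erase_of_mem (mem_univ c), Finset.card_univ, Fintype.card_fin]
    push_cast [Nat.cast_sub hC]
    ring
  have e2q : crossEnt (unif C) (smooth lam (oneHot c))
      = -((1/(C:ℝ)) * (Real.log m + ((C:ℝ)-1) * Real.log u)) := by
    rw [crossEnt]
    have h : ∑ i : Fin C, unif C i * Real.log (smooth lam (oneHot c) i)
        = (1/(C:ℝ)) * ∑ i : Fin C, Real.log (smooth lam (oneHot c) i) := by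
      rw [Finset.mul_sum]; simp [unif]
    rw [h, ← Finset.add_sum_erase _ _ (mem_univ c), hq c, if_pos rfl]
    have h2 : ∑ i ∈ univ.erase c, Real.log (smooth lam (oneHot c) i)
        = ((C:ℝ)-1) * Real.log u := by
      rw [Finset.sum_congr rfl
        (fun i hi => by rw [hq i, if_neg (Finset.ne_of_mem_erase hi)])]
      rw [Finset.sum_const, nsmul_eq_mul, hcardv]
    rw [h2]
  set S : ℝ := ∑ i ∈ univ.erase c, Real.log (p i) with hSdef
  have hsplit : ∑ i : Fin C, Real.log (p i) = Real.log (p c) + S := by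
    exact (Finset.add_sum_erase _ _ (mem_univ c)).symm
  have hTsum : ∑ i ∈ univ.erase c, p i = 1 - p c := by
    have h := Finset.add_sum_erase _ p (mem_univ c)
    rw [hsum] at h
    linarith [h]
  have hS : u * S - ((C:ℝ)-1) * u * Real.log u ≤ (1 - p c) - ((C:ℝ)-1) * u := by
    have hterm : ∀ i ∈ univ.erase c,
        u * Real.log (p i) - u * Real.log u ≤ p i - u := by
      intro i _
      have hlog := Real.log_le_sub_one_of_pos (div_pos (hpos i) hupos)
      rw [Real.log_div (ne_of_gt (hpos i)) (ne_of_gt hupos)] at hlog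
      have := mul_le_mul_of_nonneg_left hlog hupos.le
      have heq : u * (p i / u - 1) = p i - u := by field_simp
      linarith [heq ▸ this]
    have := Finset.sum_le_sum hterm
    rw [Finset.sum_sub_distrib, Finset.sum_sub_distrib, ← Finset.mul_sum,
      Finset.sum_const, Finset.sum_const, hTsum] at this
    rw [nsmul_eq_mul, nsmul_eq_mul, hcardv] at this
    linarith [this]
  rw [e1, e1q, e2, e2q, hsplit]
  have hkey : ((-Real.log (p c) + lam * -((1/(C:ℝ)) * (Real.log (p c) + S)))
        - (-Real.log m + lam * -((1/(C:ℝ)) * (Real.log m + ((C:ℝ)-1) * Real.log u))))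
      - (1 + lam) * (m * Real.log m - m * Real.log (p c) + p c - m)
      = (1 + lam) * (((1 - p c) - ((C:ℝ)-1) * u)
          - (u * S - ((C:ℝ)-1) * u * Real.log u)) := by
    rw [hmdef, hudef]
    field_simp
    ring
  have hnn : 0 ≤ (1 + lam) * (((1 - p c) - ((C:ℝ)-1) * u)
      - (u * S - ((C:ℝ)-1) * u * Real.log u)) :=
    mul_nonneg h1l.le (by linarith [hS])
  linarith [hkey, hnn]

lemma msp_le_add {C : ℕ} (hC : 1 ≤ C) (p q : Fin C → ℝ) :
    MSP p ≤ MSP q + ⨆ i, |p i - q i| := by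
  haveI : Nonempty (Fin C) := ⟨⟨0, hC⟩⟩
  rw [MSP, MSP]
  apply ciSup_le
  intro i
  have h1 : q i ≤ ⨆ j, q j := le_ciSup (Set.finite_range q).bddAbove i
  have h2 : |p i - q i| ≤ ⨆ j, |p j - q j| :=
    le_ciSup (Set.finite_range fun j => |p j - q j|).bddAbove i
  have h3 : p i - q i ≤ |p i - q i| := le_abs_self _
  linarith

lemma le_msp {C : ℕ} (p : Fin C → ℝ) (i : Fin C) : p i ≤ MSP p :=
  le_ciSup (Set.finite_range p).bddAbove i

lemma msp_le {C : ℕ} (hC : 1 ≤ C) (p : Fin C → ℝ) (a : ℝ) (h : ∀ i, p i ≤ a) :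
    MSP p ≤ a := by
  haveI : Nonempty (Fin C) := ⟨⟨0, hC⟩⟩
  exact ciSup_le h

/-- `ψ(x) = x - 1 - log x` is monotone on `[1, ∞)`. -/
lemma psi_mono {s x : ℝ} (hs : 1 ≤ s) (hsx : s ≤ x) :
    s - 1 - Real.log s ≤ x - 1 - Real.log x := by
  have hs0 : 0 < s := by linarith
  have hx0 : 0 < x := by linarith
  have hlog := Real.log_le_sub_one_of_pos (div_pos hx0 hs0)
  rw [Real.log_div (ne_of_gt hx0) (ne_of_gt hs0)] at hlog
  have : x / s - 1 ≤ x - s := by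
    rw [div_sub_one (ne_of_gt hs0), div_le_iff₀ hs0]
    nlinarith
  linarith

lemma psi_nonneg {x : ℝ} (hx : 0 < x) : 0 ≤ x - 1 - Real.log x := by
  linarith [Real.log_le_sub_one_of_pos hx]

/-- `F(t) = m log m - m log t + t - m` is antitone on `(0, m]`. -/
lemma F_anti {m t s : ℝ} (ht : 0 < t) (hts : t ≤ s) (hsm : s ≤ m) :
    m * Real.log m - m * Real.log s + s - m
      ≤ m * Real.log m - m * Real.log t + t - m := by
  have hs0 : 0 < s := lt_of_lt_of_le ht hts
  have hm0 : 0 < m := lt_of_lt_of_le hs0 hsm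
  have hlog := Real.log_le_sub_one_of_pos (div_pos ht hs0)
  rw [Real.log_div (ne_of_gt ht) (ne_of_gt hs0)] at hlog
  have h2 := mul_le_mul_of_nonneg_left hlog hm0.le
  have h5 : m * (t / s - 1) ≤ t - s := by
    rw [div_sub_one (ne_of_gt hs0), ← mul_div_assoc, div_le_iff₀ hs0]
    nlinarith
  linarith

lemma F_nonneg {m t : ℝ} (hm : 0 < m) (ht : 0 < t) :
    0 ≤ m * Real.log m - m * Real.log t + t - m := by
  have hlog := Real.log_le_sub_one_of_pos (div_pos ht hm)
  rw [Real.log_div (ne_of_gt ht) (ne_of_gt hm)] at hlog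
  have h2 := mul_le_mul_of_nonneg_left hlog hm.le
  have h3 : m * (t / m - 1) = t - m := by field_simp
  linarith

set_option maxHeartbeats 1000000 in
/-- Low DCM loss implies separation of the `δ`-neighborhoods of `A` and `B` by
maximum softmax probability, for any `K`-Lipschitz predictor. -/
theorem low_loss_implies_separation_of_neighborhoods
    (C : ℕ) (hC : 2 ≤ C) (lam K : ℝ) (hlam : 0 < lam) (hK : 0 < K)
    {X : Type*} [MetricSpace X] [DecidableEq X]
    (A B : Finset X) (hA : A.Nonempty) (hB : B.Nonempty)
    (hAB : Disjoint A B) (y : X → Fin C) :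
    ∃ ε > 0, ∃ δ > 0, ∀ f : X → (Fin C → ℝ),
      (∀ x : X, IsPosProbVec (f x)) →
      (∀ x x' : X, (⨆ i, |f x i - f x' i|) ≤ K * dist x x') →
      dcmLoss A B y lam f - dcmOptLoss A B y lam < ε →
      ∀ x' : X, (∃ a ∈ A, dist x' a < δ) →
      ∀ x'' : X, (∃ b ∈ B, dist x'' b < δ) →
      MSP (f x') > MSP (f x'') := by
  have hC1 : 1 ≤ C := by omega
  have hCR : (2:ℝ) ≤ (C:ℝ) := by exact_mod_cast hC
  have hCpos : (0:ℝ) < C := by linarith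
  have h1l : (0:ℝ) < 1 + lam := by linarith
  obtain ⟨m, hmdef⟩ : ∃ m : ℝ, m = (1 + lam / C) / (1 + lam) := ⟨_, rfl⟩
  have hmpos : 0 < m := by
    rw [hmdef]
    have : 0 < 1 + lam / C := by positivity
    positivity
  obtain ⟨G, hGdef⟩ : ∃ G : ℝ, G = m - 1 / C := ⟨_, rfl⟩
  have hGalt : G = ((C:ℝ) - 1) / ((C:ℝ) * (1 + lam)) := by
    rw [hGdef, hmdef]
    field_simp
    ring
  have hG : 0 < G := by
    rw [hGalt]
    have : (0:ℝ) < (C:ℝ) - 1 := by linarith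
    positivity
  obtain ⟨η, hηdef⟩ : ∃ η : ℝ, η = G / 4 := ⟨_, rfl⟩
  have hη : 0 < η := by rw [hηdef]; positivity
  have hmη : 0 < m - η := by
    have : G ≤ m := by
      rw [hGdef]
      have : (0:ℝ) < 1 / C := by positivity
      linarith
    rw [hηdef]; linarith
  have hmηm : m - η < m := by linarith
  obtain ⟨εA, hεAdef⟩ : ∃ e : ℝ,
      e = (1 + lam) * (m * Real.log m - m * Real.log (m - η) + (m - η) - m) :=
    ⟨_, rfl⟩
  have hεA : 0 < εA := by
    have hx : (0:ℝ) < (m - η) / m := by positivity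
    have hx1 : (m - η) / m ≠ 1 := by
      intro h
      have := (div_eq_one_iff_eq (ne_of_gt hmpos)).mp h
      linarith
    have hlog := Real.log_lt_sub_one_of_pos hx hx1
    rw [Real.log_div (ne_of_gt hmη) (ne_of_gt hmpos)] at hlog
    have h2 := mul_lt_mul_of_pos_left hlog hmpos
    have h3 : m * ((m - η) / m - 1) = -η := by field_simp; ring
    rw [hεAdef]
    apply mul_pos h1l
    linarith
  obtain ⟨εB, hεBdef⟩ : ∃ e : ℝ,
      e = lam * ((1 + (C:ℝ) * η) - 1 - Real.log (1 + (C:ℝ) * η)) / C := ⟨_, rfl⟩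
  have hψB : 0 < (1 + (C:ℝ) * η) - 1 - Real.log (1 + (C:ℝ) * η) := by
    have hx : (0:ℝ) < 1 + (C:ℝ) * η := by positivity
    have hx1 : 1 + (C:ℝ) * η ≠ 1 := by
      have : 0 < (C:ℝ) * η := by positivity
      intro h; linarith
    have := Real.log_lt_sub_one_of_pos hx hx1
    linarith
  have hεB : 0 < εB := by
    rw [hεBdef]; positivity
  refine ⟨min εA εB, lt_min hεA hεB, G / (4 * K), by positivity, ?_⟩
  intro f hf hLip hloss x' ⟨a, haA, hax⟩ x'' ⟨b, hbB, hbx⟩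
  -- per-point excesses
  obtain ⟨tA, htAdef⟩ : ∃ t : X → ℝ, t = fun x =>
      (crossEnt (oneHot (y x)) (f x) + lam * crossEnt (unif C) (f x))
        - (crossEnt (oneHot (y x)) (smooth lam (oneHot (y x)))
            + lam * crossEnt (unif C) (smooth lam (oneHot (y x)))) := ⟨_, rfl⟩
  obtain ⟨tB, htBdef⟩ : ∃ t : X → ℝ,
      t = fun x => lam * (crossEnt (unif C) (f x) - Real.log C) := ⟨_, rfl⟩
  have hdecomp : dcmLoss A B y lam f - dcmOptLoss A B y lam
      = (∑ x ∈ A, tA x) + ∑ x ∈ B, tB x := by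
    rw [dcmLoss, dcmOptLoss, htAdef, htBdef]
    simp only [mul_sub, Finset.sum_sub_distrib, Finset.sum_const, nsmul_eq_mul,
      Finset.mul_sum]
    ring
  have htA_lb : ∀ x, (1 + lam) * (m * Real.log m - m * Real.log (f x (y x))
      + f x (y x) - m) ≤ tA x := by
    intro x
    rw [htAdef, hmdef]
    exact auxA hC1 lam hlam (f x) (hf x).1 (hf x).2 (y x)
  have htA_nonneg : ∀ x ∈ A, 0 ≤ tA x := by
    intro x _
    refine le_trans ?_ (htA_lb x)
    exact mul_nonneg h1l.le (F_nonneg hmpos ((hf x).1 (y x)))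
  have htB_lb : ∀ x (j : Fin C), (C:ℝ) * f x j - 1 - Real.log ((C:ℝ) * f x j)
      ≤ (C:ℝ) * (tB x / lam) := by
    intro x j
    have h := auxB hC1 (f x) (hf x).1 (hf x).2 j
    have : tB x / lam = crossEnt (unif C) (f x) - Real.log C := by
      rw [htBdef]
      field_simp
    rw [this]
    exact h
  have htB_nonneg : ∀ x ∈ B, 0 ≤ tB x := by
    intro x _
    have h := htB_lb x ⟨0, by omega⟩
    have hψ := psi_nonneg (mul_pos hCpos ((hf x).1 ⟨0, by omega⟩))
    have h2 : 0 ≤ (C:ℝ) * (tB x / lam) := le_trans hψ h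
    have h3 : 0 ≤ tB x / lam := by
      by_contra hc
      push_neg at hc
      nlinarith
    by_contra hc
    push_neg at hc
    have : tB x / lam < 0 := div_neg_of_neg_of_pos hc hlam
    linarith
  -- individual bounds
  have htotal : (∑ x ∈ A, tA x) + ∑ x ∈ B, tB x < min εA εB := by
    rw [← hdecomp]; exact hloss
  have hsB_nonneg : 0 ≤ ∑ x ∈ B, tB x := Finset.sum_nonneg htB_nonneg
  have hsA_nonneg : 0 ≤ ∑ x ∈ A, tA x := Finset.sum_nonneg htA_nonneg
  have htAa : tA a < εA := by
    have h1 : tA a ≤ ∑ x ∈ A, tA x := Finset.single_le_sum htA_nonneg haA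
    calc tA a ≤ (∑ x ∈ A, tA x) + ∑ x ∈ B, tB x := by linarith
    _ < min εA εB := htotal
    _ ≤ εA := min_le_left _ _
  have htBb : tB b < εB := by
    have h1 : tB b ≤ ∑ x ∈ B, tB x := Finset.single_le_sum htB_nonneg hbB
    calc tB b ≤ (∑ x ∈ A, tA x) + ∑ x ∈ B, tB x := by linarith
    _ < min εA εB := htotal
    _ ≤ εB := min_le_right _ _
  -- A side: f a (y a) > m - η
  have hfa : m - η < f a (y a) := by
    by_contra hc
    push_neg at hc
    have h1 := F_anti ((hf a).1 (y a)) hc hmηm.le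
    have h2 := htA_lb a
    have h3 : εA ≤ tA a := by
      rw [hεAdef]
      calc (1 + lam) * (m * Real.log m - m * Real.log (m - η) + (m - η) - m)
          ≤ (1 + lam) * (m * Real.log m - m * Real.log (f a (y a))
              + f a (y a) - m) := by
            apply mul_le_mul_of_nonneg_left h1 h1l.le
        _ ≤ tA a := h2
    linarith
  have hmspa : m - η < MSP (f a) := lt_of_lt_of_le hfa (le_msp (f a) (y a))
  -- B side: MSP (f b) ≤ 1/C + η
  have hmspb : MSP (f b) ≤ 1 / C + η := by
    apply msp_le hC1
    intro j
    by_contra hc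
    push_neg at hc
    have hj1 : 1 + (C:ℝ) * η ≤ (C:ℝ) * f b j := by
      have := mul_lt_mul_of_pos_left hc hCpos
      have h2 : (C:ℝ) * (1 / C + η) = 1 + (C:ℝ) * η := by field_simp
      linarith
    have hmono := psi_mono (by nlinarith : (1:ℝ) ≤ 1 + (C:ℝ) * η) hj1
    have hlb := htB_lb b j
    have hub : (C:ℝ) * (tB b / lam) < (C:ℝ) * (εB / lam) := by
      gcongr
    have heq : (C:ℝ) * (εB / lam) = (1 + (C:ℝ) * η) - 1 - Real.log (1 + (C:ℝ) * η) := by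
      rw [hεBdef]
      field_simp
    linarith [hmono, hlb, hub, heq.le, heq.ge]
  -- Lipschitz transfer
  have hKd1 : K * dist a x' < G / 4 := by
    have hd : dist a x' < G / (4 * K) := by
      rw [dist_comm]; exact hax
    have := mul_lt_mul_of_pos_left hd hK
    have heq : K * (G / (4 * K)) = G / 4 := by field_simp
    linarith
  have hKd2 : K * dist x'' b < G / 4 := by
    have := mul_lt_mul_of_pos_left hbx hK
    have heq : K * (G / (4 * K)) = G / 4 := by field_simp
    linarith
  have h1 : MSP (f a) ≤ MSP (f x') + K * dist a x' :=
    le_trans (msp_le_add hC1 (f a) (f x')) (by linarith [hLip a x'])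
  have h2 : MSP (f x'') ≤ MSP (f b) + K * dist x'' b :=
    le_trans (msp_le_add hC1 (f x'') (f b)) (by linarith [hLip x'' b])
  have hm_eq : m = 1 / C + G := by rw [hGdef]; ring
  calc MSP (f x'') ≤ MSP (f b) + K * dist x'' b := h2
    _ < (1 / C + η) + G / 4 := by linarith [hmspb]
    _ = (m - η) - G / 4 := by rw [hm_eq, hηdef]; ring
    _ < MSP (f a) - K * dist a x' := by linarith [hmspa]
    _ ≤ MSP (f x') := by linarith [h1]
end
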